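/- arXiv:1901.05668 — 6 statements merged into one kernel-verified Lean document; each statement's English description precedes it below -/
import Mathlib

section
/- Let Γ be an m×m real symmetric positive definite matrix, Ĉ an n×n real symmetric positive semidefinite matrix, H an m×n real matrix, and y' ∈ ℝᵐ. Define a* = (HᵀΓ⁻¹HĈ + Iₙ)⁻¹HᵀΓ⁻¹y' and v'* = Ĉa*. Then for every pair (a, v') ∈ ℝⁿ × ℝⁿ with Ĉa = v', one has ½(y' − Hv'*)ᵀΓ⁻¹(y' − Hv'*) + ½⟨a*, v'*⟩ ≤ ½(y' − Hv')ᵀΓ⁻¹(y' − Hv') + ½⟨a, v'⟩, with equality only if v' = v'*; moreover v'* = ĈHᵀ(HĈHᵀ + Γ)⁻¹y'. -/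
/-!
Write `B = Γ⁻¹` and `A = HᵀBHĈ + 1`. The defining equation `A a* = HᵀB y'` says exactly that
`a* = HᵀB (y' - HĈa*)`, the stationarity condition of the quadratic objective along `a ↦ (a, Ĉa)`.
Expanding the objective around this point, the cross terms cancel, leaving
`J(a* + d) = J(a*) + ½⟨HĈd, B HĈd⟩ + ½⟨d, Ĉd⟩`, a sum of nonnegative terms whose last one vanishes
only when `Ĉd = 0`. Invertibility of `A` comes from pairing `A x = 0` with `Ĉx`, and the closed form
of `v'*` from the push-through identity `HᵀB (HĈHᵀ + Γ) = A Hᵀ`.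
-/

open Matrix

namespace Matrix

section CommRing

variable {m n R : Type*} [Fintype m] [Fintype n] [CommRing R]

lemma IsSymm.dotProduct_mulVec_comm {Q : Matrix n n R} (hQ : Q.IsSymm) (u w : n → R) :
    u ⬝ᵥ Q *ᵥ w = w ⬝ᵥ Q *ᵥ u := by
  rw [dotProduct_mulVec, ← mulVec_transpose, hQ.eq, dotProduct_comm]

lemma IsSymm.add_dotProduct_mulVec_add {Q : Matrix n n R} (hQ : Q.IsSymm) (u w : n → R) :
    (u + w) ⬝ᵥ Q *ᵥ (u + w) = u ⬝ᵥ Q *ᵥ u + 2 * (w ⬝ᵥ Q *ᵥ u) + w ⬝ᵥ Q *ᵥ w := by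
  rw [mulVec_add, add_dotProduct, dotProduct_add, dotProduct_add, hQ.dotProduct_mulVec_comm u w]
  ring

lemma eq_mulVec_sub_of_mul_add_one_mulVec_eq {B : Matrix m m R} {H : Matrix m n R}
    {C : Matrix n n R} {y : m → R} {a : n → R} [DecidableEq n]
    (h : (Hᵀ * B * H * C + 1) *ᵥ a = (Hᵀ * B) *ᵥ y) :
    a = (Hᵀ * B) *ᵥ (y - H *ᵥ C *ᵥ a) := by
  rw [mulVec_sub, ← h, add_mulVec, one_mulVec, mulVec_mulVec, mulVec_mulVec, Matrix.mul_assoc _ H,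
    ← Matrix.mul_assoc, add_sub_cancel_left]

lemma inv_mul_eq_mul_inv_of_mul_eq_mul [DecidableEq m] [DecidableEq n] {X Y : Matrix n m R}
    {P : Matrix m m R} {Q : Matrix n n R} (hP : IsUnit P.det) (hQ : IsUnit Q.det)
    (h : X * P = Q * Y) : Q⁻¹ * X = Y * P⁻¹ := by
  rw [← mul_nonsing_inv_cancel_right P X hP, h, Matrix.mul_assoc Q, nonsing_inv_mul_cancel_left Q _ hQ]

lemma inv_mul_add_one_mul_transpose_mul_inv [DecidableEq m] [DecidableEq n]
    {Γ : Matrix m m R} {H : Matrix m n R} {C : Matrix n n R} (hΓ : IsUnit Γ.det)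
    (hA : IsUnit (Hᵀ * Γ⁻¹ * H * C + 1).det) (hS : IsUnit (H * C * Hᵀ + Γ).det) :
    (Hᵀ * Γ⁻¹ * H * C + 1)⁻¹ * (Hᵀ * Γ⁻¹) = Hᵀ * (H * C * Hᵀ + Γ)⁻¹ := by
  refine inv_mul_eq_mul_inv_of_mul_eq_mul hS hA ?_
  rw [Matrix.mul_add, Matrix.add_mul, Matrix.one_mul, Matrix.mul_assoc Hᵀ Γ⁻¹ Γ,
    nonsing_inv_mul Γ hΓ, Matrix.mul_one]
  simp only [Matrix.mul_assoc]

end CommRing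

lemma PosSemidef.isUnit_det_mul_add_one {n : Type*} [Fintype n] [DecidableEq n]
    {M C : Matrix n n ℝ} (hM : M.PosSemidef) (hC : C.PosSemidef) : IsUnit (M * C + 1).det := by
  refine isUnit_iff_ne_zero.mpr fun hdet => ?_
  obtain ⟨x, hx0, hx⟩ := exists_mulVec_eq_zero_iff.mpr hdet
  rw [add_mulVec, one_mulVec, ← mulVec_mulVec] at hx
  have hsum : (C *ᵥ x) ⬝ᵥ M *ᵥ (C *ᵥ x) + x ⬝ᵥ C *ᵥ x = 0 := by
    rw [dotProduct_comm x, ← dotProduct_add, hx, dotProduct_zero]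
  have hMnn : 0 ≤ (C *ᵥ x) ⬝ᵥ M *ᵥ (C *ᵥ x) := by simpa using hM.dotProduct_mulVec_nonneg (C *ᵥ x)
  have hCnn : 0 ≤ x ⬝ᵥ C *ᵥ x := by simpa using hC.dotProduct_mulVec_nonneg x
  have hCx : C *ᵥ x = 0 := (hC.dotProduct_mulVec_zero_iff x).mp (by simp only [star_trivial]; linarith)
  exact hx0 (by rwa [hCx, mulVec_zero, zero_add] at hx)

end Matrix

section KalmanObjective

variable {m n : Type*} [Fintype m] [Fintype n]

/-- The ensemble Kalman objective of the paper, with `B` in the role of `Γ⁻¹`. -/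
noncomputable def kalmanObjective (B : Matrix m m ℝ) (H : Matrix m n ℝ) (y : m → ℝ) (a v : n → ℝ) : ℝ :=
  1 / 2 * ((y - H *ᵥ v) ⬝ᵥ B *ᵥ (y - H *ᵥ v)) + 1 / 2 * (a ⬝ᵥ v)

variable {B : Matrix m m ℝ} {H : Matrix m n ℝ} {C : Matrix n n ℝ} {y : m → ℝ} {astar : n → ℝ}

lemma kalmanObjective_add (hB : B.IsSymm) (hC : C.IsSymm)
    (hstat : astar = (Hᵀ * B) *ᵥ (y - H *ᵥ C *ᵥ astar)) (d : n → ℝ) :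
    kalmanObjective B H y (astar + d) (C *ᵥ (astar + d)) =
      kalmanObjective B H y astar (C *ᵥ astar) +
        1 / 2 * ((H *ᵥ C *ᵥ d) ⬝ᵥ B *ᵥ (H *ᵥ C *ᵥ d)) + 1 / 2 * (d ⬝ᵥ C *ᵥ d) := by
  set s := y - H *ᵥ C *ᵥ astar
  have hres : y - H *ᵥ C *ᵥ (astar + d) = s + -(H *ᵥ C *ᵥ d) := by
    rw [mulVec_add, mulVec_add, ← sub_sub, sub_eq_add_neg]
  have hcross : (H *ᵥ C *ᵥ d) ⬝ᵥ B *ᵥ s = d ⬝ᵥ C *ᵥ astar := by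
    rw [← vecMul_transpose, ← dotProduct_mulVec, mulVec_mulVec, ← hstat, dotProduct_comm,
      hC.dotProduct_mulVec_comm]
  unfold kalmanObjective
  rw [hres, hB.add_dotProduct_mulVec_add, hC.add_dotProduct_mulVec_add, neg_dotProduct, hcross,
    mulVec_neg, dotProduct_neg, neg_dotProduct, neg_neg]
  ring

variable (hB : B.PosSemidef) (hC : C.PosSemidef)
  (hstat : astar = (Hᵀ * B) *ᵥ (y - H *ᵥ C *ᵥ astar))
include hB hC hstat

lemma kalmanObjective_eq_add_of_posSemidef (a : n → ℝ) :
    kalmanObjective B H y a (C *ᵥ a) =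
      kalmanObjective B H y astar (C *ᵥ astar) +
        1 / 2 * ((H *ᵥ C *ᵥ (a - astar)) ⬝ᵥ B *ᵥ (H *ᵥ C *ᵥ (a - astar))) +
          1 / 2 * ((a - astar) ⬝ᵥ C *ᵥ (a - astar)) := by
  rw [← kalmanObjective_add (isHermitian_iff_isSymm.mp hB.isHermitian)
    (isHermitian_iff_isSymm.mp hC.isHermitian) hstat, add_sub_cancel]

lemma kalmanObjective_le (a : n → ℝ) :
    kalmanObjective B H y astar (C *ᵥ astar) ≤ kalmanObjective B H y a (C *ᵥ a) := by
  have h₁ := hB.dotProduct_mulVec_nonneg (H *ᵥ C *ᵥ (a - astar))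
  have h₂ := hC.dotProduct_mulVec_nonneg (a - astar)
  simp only [star_trivial] at h₁ h₂
  rw [kalmanObjective_eq_add_of_posSemidef hB hC hstat a]
  linarith

lemma mulVec_eq_of_kalmanObjective_eq {a : n → ℝ}
    (h : kalmanObjective B H y a (C *ᵥ a) = kalmanObjective B H y astar (C *ᵥ astar)) :
    C *ᵥ a = C *ᵥ astar := by
  have h₁ := hB.dotProduct_mulVec_nonneg (H *ᵥ C *ᵥ (a - astar))
  have h₂ := hC.dotProduct_mulVec_nonneg (a - astar)
  simp only [star_trivial] at h₁ h₂
  rw [kalmanObjective_eq_add_of_posSemidef hB hC hstat a] at h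
  have hzero : C *ᵥ (a - astar) = 0 :=
    (hC.dotProduct_mulVec_zero_iff _).mp (by simp only [star_trivial]; linarith)
  rwa [mulVec_sub, sub_eq_zero] at hzero

end KalmanObjective

theorem stmt_7 {m n : ℕ}
    (Γ : Matrix (Fin m) (Fin m) ℝ) (hΓ : Γ.PosDef)
    (C : Matrix (Fin n) (Fin n) ℝ) (hC : C.PosSemidef)
    (H : Matrix (Fin m) (Fin n) ℝ)
    (y' : Fin m → ℝ)
    (astar : Fin n → ℝ)
    (hastar : astar = ((Hᵀ * Γ⁻¹ * H * C + 1)⁻¹ * (Hᵀ * Γ⁻¹)).mulVec y')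
    (vstar : Fin n → ℝ)
    (hvstar : vstar = C.mulVec astar) :
    (∀ a v' : Fin n → ℝ, C.mulVec a = v' →
      ((1 / 2) * ((y' - H.mulVec vstar) ⬝ᵥ Γ⁻¹.mulVec (y' - H.mulVec vstar)) +
        (1 / 2) * (astar ⬝ᵥ vstar) ≤
       (1 / 2) * ((y' - H.mulVec v') ⬝ᵥ Γ⁻¹.mulVec (y' - H.mulVec v')) +
        (1 / 2) * (a ⬝ᵥ v')) ∧
      ((1 / 2) * ((y' - H.mulVec v') ⬝ᵥ Γ⁻¹.mulVec (y' - H.mulVec v')) +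
        (1 / 2) * (a ⬝ᵥ v') =
       (1 / 2) * ((y' - H.mulVec vstar) ⬝ᵥ Γ⁻¹.mulVec (y' - H.mulVec vstar)) +
        (1 / 2) * (astar ⬝ᵥ vstar) → v' = vstar)) ∧
    vstar = (C * Hᵀ * (H * C * Hᵀ + Γ)⁻¹).mulVec y' := by
  have hB : (Γ⁻¹).PosSemidef := hΓ.inv.posSemidef
  have hA : IsUnit (Hᵀ * Γ⁻¹ * H * C + 1).det := by
    simpa using (hB.conjTranspose_mul_mul_same H).isUnit_det_mul_add_one hC
  have hstat : astar = (Hᵀ * Γ⁻¹) *ᵥ (y' - H *ᵥ C *ᵥ astar) :=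
    eq_mulVec_sub_of_mul_add_one_mulVec_eq <| by
      rw [hastar, mulVec_mulVec, mul_nonsing_inv_cancel_left _ _ hA]
  have hS : IsUnit (H * C * Hᵀ + Γ).det := by
    simpa using (PosDef.posSemidef_add (hC.mul_mul_conjTranspose_same H) hΓ).det_pos.ne'.isUnit
  subst hvstar
  refine ⟨fun a v' hv' => ?_, ?_⟩
  · subst hv'
    exact ⟨kalmanObjective_le hB hC hstat a, mulVec_eq_of_kalmanObjective_eq hB hC hstat⟩
  · rw [hastar, mulVec_mulVec, Matrix.mul_assoc C,
      inv_mul_add_one_mul_transpose_mul_inv hΓ.det_pos.ne'.isUnit hA hS, Matrix.mul_assoc]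
end

section
/- Let Γ be an m×m real symmetric positive definite matrix, Ĉ an n×n real symmetric positive semidefinite matrix, H an m×n real matrix, y' ∈ ℝᵐ, F a k×n real matrix, G an l×n real matrix, f' ∈ ℝᵏ and g' ∈ ℝˡ. Suppose the feasible set 𝒮 = {(a, v') ∈ ℝⁿ × ℝⁿ : Ĉa = v', Fv' = f', Gv' ≤ g' componentwise} is nonempty. Then there exists a feasible pair (a*, v'*) ∈ 𝒮 minimizing the objective f(a, v') = ½(y' − Hv')ᵀΓ⁻¹(y' − Hv') + ½⟨a, v'⟩ over 𝒮, and the minimizing v'-component is unique: if (a₁, v₁) and (a₂, v₂) are both minimizers over 𝒮, then v₁ = v₂. -/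
/-!
On the feasible set `v' = Ĉ a`, so `⟨a, v'⟩ = aᵀ Ĉ a` and the objective is `J a / 2`, where
`J a = g (Ĉ a) + aᵀ Ĉ a` and `g` is a convex quadratic.
Writing `Ĉ = Bᵀ B` and `w = B a` turns `J` into `g (Bᵀ w) + |w|²`, which is continuous and
coercive on the closed set `range B ∩ {w | Bᵀ w feasible}`, so it attains its minimum.
For uniqueness, the parallelogram identity at the midpoint `m` of two minimizers gives
`J m ≤ (J a₁ + J a₂) / 2 - (a₁ - a₂)ᵀ Ĉ (a₁ - a₂) / 4`, forcing `Ĉ (a₁ - a₂) = 0`.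
-/

open Matrix Set Filter Topology

namespace Matrix

variable {ι : Type*} [Fintype ι]

theorem dotProduct_mulVec_smul_add_smul (A : Matrix ι ι ℝ) (x y : ι → ℝ) {a b : ℝ}
    (hab : a + b = 1) :
    (a • x + b • y) ⬝ᵥ A *ᵥ (a • x + b • y) =
      a * (x ⬝ᵥ A *ᵥ x) + b * (y ⬝ᵥ A *ᵥ y) - a * b * ((x - y) ⬝ᵥ A *ᵥ (x - y)) := by
  obtain rfl : b = 1 - a := by linarith
  simp only [mulVec_add, mulVec_sub, mulVec_smul, dotProduct_add, add_dotProduct,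
    dotProduct_sub, sub_dotProduct, dotProduct_smul, smul_dotProduct, smul_eq_mul]
  ring

theorem PosSemidef.convexOn_dotProduct_mulVec {A : Matrix ι ι ℝ} (hA : A.PosSemidef) :
    ConvexOn ℝ univ fun x : ι → ℝ => x ⬝ᵥ A *ᵥ x := by
  refine ⟨convex_univ, fun x _ y _ a b ha hb hab => ?_⟩
  have hxy : 0 ≤ (x - y) ⬝ᵥ A *ᵥ (x - y) := by simpa using hA.dotProduct_mulVec_nonneg (x - y)
  dsimp only
  rw [dotProduct_mulVec_smul_add_smul A x y hab, smul_eq_mul, smul_eq_mul]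
  nlinarith [mul_nonneg (mul_nonneg ha hb) hxy]

theorem PosSemidef.convexOn_dotProduct_mulVec_sub_mulVec {κ : Type*} [Fintype κ]
    {P : Matrix κ κ ℝ} (hP : P.PosSemidef) (H : Matrix κ ι ℝ) (y : κ → ℝ) :
    ConvexOn ℝ univ fun v : ι → ℝ => (y - H *ᵥ v) ⬝ᵥ P *ᵥ (y - H *ᵥ v) :=
  hP.convexOn_dotProduct_mulVec.comp_affineMap
    (AffineMap.const ℝ (ι → ℝ) y - H.mulVecLin.toAffineMap)

end Matrix

theorem norm_sq_le_dotProduct_self {ι : Type*} [Fintype ι] (x : ι → ℝ) : ‖x‖ ^ 2 ≤ x ⬝ᵥ x := by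
  have hx : 0 ≤ x ⬝ᵥ x := Finset.sum_nonneg fun i _ => mul_self_nonneg (x i)
  rw [← Real.le_sqrt (norm_nonneg x) hx, pi_norm_le_iff_of_nonneg (Real.sqrt_nonneg _)]
  intro i
  rw [Real.norm_eq_abs, ← Real.sqrt_sq_eq_abs, sq]
  exact Real.sqrt_le_sqrt <| Finset.single_le_sum (f := fun j => x j * x j)
    (fun j _ => mul_self_nonneg _) (Finset.mem_univ i)

theorem tendsto_dotProduct_self_cocompact {ι : Type*} [Fintype ι] :
    Tendsto (fun x : ι → ℝ => x ⬝ᵥ x) (cocompact _) atTop :=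
  tendsto_atTop_mono norm_sq_le_dotProduct_self <|
    (tendsto_pow_atTop two_ne_zero).comp tendsto_norm_cocompact_atTop

theorem forall_le_iff_isMinOn_of_mem_iff {α β γ : Type*} [Preorder γ] {S : Set (α × β)}
    {A : Set α} {φ : α → β} (hS : ∀ a b, (a, b) ∈ S ↔ φ a = b ∧ a ∈ A) {f : α × β → γ}
    {a : α} {b : β} (hab : (a, b) ∈ S) :
    (∀ r ∈ S, f (a, b) ≤ f r) ↔ IsMinOn (fun a => f (a, φ a)) A a := by
  obtain ⟨rfl, -⟩ := (hS _ _).1 hab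
  constructor
  · intro h a' ha'
    exact h _ ((hS _ _).2 ⟨rfl, ha'⟩)
  · rintro h ⟨a', _⟩ hr
    obtain ⟨rfl, ha'⟩ := (hS _ _).1 hr
    exact h ha'

theorem isClosed_setOf_mulVec_eq_and_mulVec_le {ι κ μ : Type*} [Fintype ι]
    (F : Matrix κ ι ℝ) (G : Matrix μ ι ℝ) (f : κ → ℝ) (g : μ → ℝ) :
    IsClosed {v | F *ᵥ v = f ∧ G *ᵥ v ≤ g} :=
  (isClosed_eq (continuous_const.matrix_mulVec continuous_id) continuous_const).inter
    (isClosed_le (continuous_const.matrix_mulVec continuous_id) continuous_const)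

theorem convex_setOf_mulVec_eq_and_mulVec_le {ι κ μ : Type*} [Fintype ι]
    (F : Matrix κ ι ℝ) (G : Matrix μ ι ℝ) (f : κ → ℝ) (g : μ → ℝ) :
    Convex ℝ {v | F *ᵥ v = f ∧ G *ᵥ v ≤ g} :=
  ((convex_singleton f).linear_preimage F.mulVecLin).inter
    ((convex_Iic g).linear_preimage G.mulVecLin)

namespace Matrix.PosSemidef

variable {ι : Type*} [Fintype ι] {C : Matrix ι ι ℝ}

theorem exists_isMinOn_comp_mulVec_add (hC : C.PosSemidef) {g : (ι → ℝ) → ℝ}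
    (hg : Continuous g) (hg_bdd : BddBelow (range g)) {K : Set (ι → ℝ)} (hK : IsClosed K)
    (hne : ((C *ᵥ ·) ⁻¹' K).Nonempty) :
    ∃ a ∈ (C *ᵥ ·) ⁻¹' K, IsMinOn (fun a => g (C *ᵥ a) + a ⬝ᵥ C *ᵥ a) ((C *ᵥ ·) ⁻¹' K) a := by
  classical
  obtain ⟨B, rfl⟩ : ∃ B : Matrix ι ι ℝ, C = Bᴴ * B := by
    open scoped MatrixOrder in exact CStarAlgebra.nonneg_iff_eq_star_mul_self.mp hC.nonneg
  set ψ : (ι → ℝ) → ℝ := fun w => g (Bᴴ *ᵥ w) + w ⬝ᵥ w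
  set T : Set (ι → ℝ) := (LinearMap.range B.mulVecLin : Set (ι → ℝ)) ∩ (Bᴴ *ᵥ ·) ⁻¹' K
  have hψ_comp : ∀ a, g ((Bᴴ * B) *ᵥ a) + a ⬝ᵥ (Bᴴ * B) *ᵥ a = ψ (B *ᵥ a) := fun a => by
    rw [← mulVec_mulVec, dotProduct_mulVec, vecMul_conjTranspose, star_trivial, star_trivial]
  have hψ : Continuous ψ := (hg.comp (continuous_const.matrix_mulVec continuous_id)).add
    (continuous_id.dotProduct continuous_id)
  have hT : IsClosed T := (Submodule.closed_of_finiteDimensional _).inter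
    (hK.preimage (continuous_const.matrix_mulVec continuous_id))
  obtain ⟨c, hc⟩ := hg_bdd
  have hψ_coercive : Tendsto ψ (cocompact _) atTop :=
    tendsto_atTop_add_left_of_le' _ c (Eventually.of_forall fun w => hc ⟨_, rfl⟩)
      tendsto_dotProduct_self_cocompact
  obtain ⟨a₀, ha₀⟩ := hne
  have hmem : ∀ a ∈ ((Bᴴ * B) *ᵥ ·) ⁻¹' K, B *ᵥ a ∈ T := fun a ha =>
    ⟨⟨a, rfl⟩, by simpa only [mem_preimage, mulVec_mulVec] using ha⟩
  obtain ⟨_, ⟨⟨a, rfl⟩, haK⟩, hmin⟩ := hψ.continuousOn.exists_isMinOn' hT (hmem a₀ ha₀)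
    ((hψ_coercive.eventually (eventually_ge_atTop _)).filter_mono inf_le_left)
  rw [mulVecLin_apply] at haK hmin
  refine ⟨a, by simpa only [mem_preimage, mulVec_mulVec] using haK, fun a' ha' => ?_⟩
  simpa only [mem_ofPred_eq, hψ_comp] using hmin (hmem a' ha')

theorem mulVec_eq_of_isMinOn_comp_mulVec_add (hC : C.PosSemidef) {g : (ι → ℝ) → ℝ}
    {K : Set (ι → ℝ)} (hg : ConvexOn ℝ K g) {a₁ a₂ : ι → ℝ}
    (ha₁ : a₁ ∈ (C *ᵥ ·) ⁻¹' K) (ha₂ : a₂ ∈ (C *ᵥ ·) ⁻¹' K)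
    (hmin₁ : IsMinOn (fun a => g (C *ᵥ a) + a ⬝ᵥ C *ᵥ a) ((C *ᵥ ·) ⁻¹' K) a₁)
    (hmin₂ : IsMinOn (fun a => g (C *ᵥ a) + a ⬝ᵥ C *ᵥ a) ((C *ᵥ ·) ⁻¹' K) a₂) :
    C *ᵥ a₁ = C *ᵥ a₂ := by
  set m : ι → ℝ := (1 / 2 : ℝ) • a₁ + (1 / 2 : ℝ) • a₂
  have hCm : C *ᵥ m = (1 / 2 : ℝ) • C *ᵥ a₁ + (1 / 2 : ℝ) • C *ᵥ a₂ := by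
    rw [mulVec_add, mulVec_smul, mulVec_smul]
  have hm : m ∈ (C *ᵥ ·) ⁻¹' K := by
    rw [mem_preimage, hCm]; exact hg.1 ha₁ ha₂ (by norm_num) (by norm_num) (by norm_num)
  have hg_mid := hg.2 ha₁ ha₂ (by norm_num : (0 : ℝ) ≤ 1 / 2) (by norm_num : (0 : ℝ) ≤ 1 / 2)
    (by norm_num)
  rw [← hCm, smul_eq_mul, smul_eq_mul] at hg_mid
  -- `J m ≤ (J a₁ + J a₂) / 2 - (a₁ - a₂)ᵀ C (a₁ - a₂) / 4`, while `J a₁ = J a₂ ≤ J m`.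
  have hq_mid := dotProduct_mulVec_smul_add_smul C a₁ a₂ (by norm_num : (1 / 2 : ℝ) + 1 / 2 = 1)
  have h₁₂ := hmin₁ ha₂
  have h₂₁ := hmin₂ ha₁
  have h₁m := hmin₁ hm
  simp only [mem_ofPred_eq] at h₁₂ h₂₁ h₁m
  have hdiff : (a₁ - a₂) ⬝ᵥ C *ᵥ (a₁ - a₂) = 0 := by
    have := hC.dotProduct_mulVec_nonneg (a₁ - a₂)
    simp only [star_trivial] at this
    nlinarith
  rw [← sub_eq_zero, ← mulVec_sub]
  simpa only [star_trivial] using (hC.dotProduct_mulVec_zero_iff (a₁ - a₂)).mp hdiff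

end Matrix.PosSemidef

theorem stmt_10 {m n k l : ℕ}
    (Γ : Matrix (Fin m) (Fin m) ℝ) (hΓ : Γ.PosDef)
    (C : Matrix (Fin n) (Fin n) ℝ) (hC : C.PosSemidef)
    (H : Matrix (Fin m) (Fin n) ℝ)
    (y' : Fin m → ℝ)
    (F : Matrix (Fin k) (Fin n) ℝ) (G : Matrix (Fin l) (Fin n) ℝ)
    (f' : Fin k → ℝ) (g' : Fin l → ℝ)
    (S : Set ((Fin n → ℝ) × (Fin n → ℝ)))
    (hS : S = {p | C.mulVec p.1 = p.2 ∧ F.mulVec p.2 = f' ∧ G.mulVec p.2 ≤ g'})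
    (hne : S.Nonempty)
    (obj : (Fin n → ℝ) × (Fin n → ℝ) → ℝ)
    (hobj : ∀ p, obj p =
      (1 / 2) * ((y' - H.mulVec p.2) ⬝ᵥ Γ⁻¹.mulVec (y' - H.mulVec p.2)) +
      (1 / 2) * (p.1 ⬝ᵥ p.2)) :
    (∃ p ∈ S, ∀ q ∈ S, obj p ≤ obj q) ∧
    (∀ p ∈ S, ∀ q ∈ S,
      (∀ r ∈ S, obj p ≤ obj r) → (∀ r ∈ S, obj q ≤ obj r) → p.2 = q.2) := by
  set K : Set (Fin n → ℝ) := {v | F *ᵥ v = f' ∧ G *ᵥ v ≤ g'}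
  set A : Set (Fin n → ℝ) := (C *ᵥ ·) ⁻¹' K
  set g : (Fin n → ℝ) → ℝ := fun v => (y' - H *ᵥ v) ⬝ᵥ Γ⁻¹ *ᵥ (y' - H *ᵥ v)
  set J : (Fin n → ℝ) → ℝ := fun a => g (C *ᵥ a) + a ⬝ᵥ C *ᵥ a
  have hmem : ∀ a v, (a, v) ∈ S ↔ C *ᵥ a = v ∧ a ∈ A := fun a v => by
    rw [hS]
    show C *ᵥ a = v ∧ _ ↔ _
    constructor <;> rintro ⟨rfl, hK⟩ <;> exact ⟨rfl, hK⟩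
  have hmin : ∀ a v, (a, v) ∈ S → ((∀ r ∈ S, obj (a, v) ≤ obj r) ↔ IsMinOn J A a) :=
    fun a v hav => (forall_le_iff_isMinOn_of_mem_iff hmem hav).trans <| by
      simp only [isMinOn_iff, hobj, J, g]
      exact forall₂_congr fun _ _ => by constructor <;> intro h <;> linarith
  have hΓinv : Γ⁻¹.PosSemidef := hΓ.inv.posSemidef
  constructor
  · obtain ⟨⟨a₀, v₀⟩, h₀⟩ := hne
    obtain ⟨a, ha, ha_min⟩ := hC.exists_isMinOn_comp_mulVec_add (g := g) (by fun_prop)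
      ⟨0, by rintro _ ⟨v, rfl⟩; exact hΓinv.dotProduct_mulVec_nonneg _⟩
      (isClosed_setOf_mulVec_eq_and_mulVec_le F G f' g') ⟨a₀, ((hmem a₀ v₀).1 h₀).2⟩
    have hS_a : (a, C *ᵥ a) ∈ S := (hmem _ _).2 ⟨rfl, ha⟩
    exact ⟨_, hS_a, (hmin _ _ hS_a).2 ha_min⟩
  · rintro ⟨a₁, v₁⟩ h₁ ⟨a₂, v₂⟩ h₂ hmin₁ hmin₂
    obtain ⟨rfl, ha₁⟩ := (hmem _ _).1 h₁
    obtain ⟨rfl, ha₂⟩ := (hmem _ _).1 h₂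
    exact hC.mulVec_eq_of_isMinOn_comp_mulVec_add
      ((hΓinv.convexOn_dotProduct_mulVec_sub_mulVec H y').subset (subset_univ K)
        (convex_setOf_mulVec_eq_and_mulVec_le F G f' g'))
      ha₁ ha₂ ((hmin _ _ h₁).1 hmin₁) ((hmin _ _ h₂).1 hmin₂)
end

section
/- Let C be an n×n real symmetric positive semidefinite matrix and v₀ ∈ ℝⁿ, and set w = Cv₀. Then wᵀ(C + εIₙ)⁻¹w converges to v₀ᵀCv₀ as ε → 0 from the right. -/
/-!
Put `A = C + ε • 1` and `y = A⁻¹ v₀`. Since `C v₀ = A v₀ - ε v₀`, we get `A⁻¹ (C v₀) = v₀ - ε y`,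
hence `(C v₀) ⬝ A⁻¹ (C v₀) = v₀ ⬝ C v₀ - ε ((C v₀) ⬝ y)`. Writing `v₀ = C y + ε y` shows
`0 ≤ (C v₀) ⬝ y ≤ v₀ ⬝ v₀`, so the correction term is squeezed between `0` and `ε (v₀ ⬝ v₀)`.
-/

open Matrix Topology Filter

namespace Matrix.PosSemidef

variable {ι : Type*} [DecidableEq ι] {C : Matrix ι ι ℝ} {ε : ℝ}

theorem posDef_add_smul_one (hC : C.PosSemidef) (hε : 0 < ε) : (C + ε • 1).PosDef :=
  PosDef.posSemidef_add hC (PosDef.one.smul hε)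

variable [Fintype ι]

theorem isUnit_det_add_smul_one (hC : C.PosSemidef) (hε : 0 < ε) : IsUnit (C + ε • 1).det :=
  (hC.posDef_add_smul_one hε).isUnit.map detMonoidHom

theorem inv_add_smul_one_mulVec_mulVec (hC : C.PosSemidef) (hε : 0 < ε) (v : ι → ℝ) :
    (C + ε • 1)⁻¹ *ᵥ (C *ᵥ v) = v - ε • ((C + ε • 1)⁻¹ *ᵥ v) := by
  have hCv : C *ᵥ v = (C + ε • 1) *ᵥ v - ε • v := by
    rw [add_mulVec, smul_mulVec, one_mulVec, add_sub_cancel_right]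
  rw [hCv, mulVec_sub, mulVec_smul, mulVec_mulVec,
    nonsing_inv_mul _ (hC.isUnit_det_add_smul_one hε), one_mulVec]

theorem mulVec_dotProduct_inv_add_smul_one_mulVec_mem_Icc (hC : C.PosSemidef) (hε : 0 < ε)
    (v : ι → ℝ) : C *ᵥ v ⬝ᵥ (C + ε • 1)⁻¹ *ᵥ v ∈ Set.Icc 0 (v ⬝ᵥ v) := by
  set y := (C + ε • 1)⁻¹ *ᵥ v
  have hv : v = C *ᵥ y + ε • y := by
    have hAy : (C + ε • 1) *ᵥ y = v := by
      rw [mulVec_mulVec, mul_nonsing_inv _ (hC.isUnit_det_add_smul_one hε), one_mulVec]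
    rw [← hAy, add_mulVec, smul_mulVec, one_mulVec]
  have hCt : Cᵀ = C := hC.isHermitian.eq
  have hsymm : C *ᵥ v ⬝ᵥ y = v ⬝ᵥ C *ᵥ y := by
    rw [dotProduct_comm, dotProduct_mulVec, ← mulVec_transpose, hCt, dotProduct_comm]
  have hCyy : 0 ≤ y ⬝ᵥ C *ᵥ y := hC.dotProduct_mulVec_nonneg y
  have hCyCy : 0 ≤ C *ᵥ y ⬝ᵥ C *ᵥ y := dotProduct_self_star_nonneg _
  have hyy : 0 ≤ y ⬝ᵥ y := dotProduct_self_star_nonneg _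
  rw [hsymm, hv]
  simp only [add_dotProduct, dotProduct_add, smul_dotProduct, dotProduct_smul, smul_eq_mul,
    dotProduct_comm (C *ᵥ y) y]
  constructor <;> nlinarith [mul_nonneg hε.le hCyy, mul_nonneg (mul_nonneg hε.le hε.le) hyy]

theorem mulVec_dotProduct_inv_add_smul_one_mulVec_mulVec (hC : C.PosSemidef) (hε : 0 < ε)
    (v : ι → ℝ) : C *ᵥ v ⬝ᵥ (C + ε • 1)⁻¹ *ᵥ (C *ᵥ v)
      = v ⬝ᵥ C *ᵥ v - ε * (C *ᵥ v ⬝ᵥ (C + ε • 1)⁻¹ *ᵥ v) := by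
  rw [hC.inv_add_smul_one_mulVec_mulVec hε, dotProduct_sub, dotProduct_smul, smul_eq_mul,
    dotProduct_comm]

end Matrix.PosSemidef

theorem stmt_12 {n : ℕ}
    (C : Matrix (Fin n) (Fin n) ℝ) (hC : C.PosSemidef)
    (v₀ : Fin n → ℝ) (w : Fin n → ℝ) (hw : w = C.mulVec v₀) :
    Tendsto (fun ε : ℝ => w ⬝ᵥ (C + ε • 1)⁻¹.mulVec w)
      (𝓝[>] 0) (𝓝 (v₀ ⬝ᵥ C.mulVec v₀)) := by
  subst hw
  have hbound := fun ε (hε : 0 < ε) => hC.mulVec_dotProduct_inv_add_smul_one_mulVec_mem_Icc hε v₀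
  have hcorr : Tendsto (fun ε : ℝ => ε * (C *ᵥ v₀ ⬝ᵥ (C + ε • 1)⁻¹ *ᵥ v₀)) (𝓝[>] 0) (𝓝 0) := by
    have hlin : Tendsto (fun ε : ℝ => ε * (v₀ ⬝ᵥ v₀)) (𝓝[>] 0) (𝓝 0) := by
      simpa using (tendsto_id.mul_const (v₀ ⬝ᵥ v₀)).mono_left (nhdsWithin_le_nhds (a := (0 : ℝ)))
    refine squeeze_zero' ?_ ?_ hlin <;>
      filter_upwards [self_mem_nhdsWithin] with ε (hε : 0 < ε)
    · exact mul_nonneg hε.le (hbound ε hε).1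
    · exact mul_le_mul_of_nonneg_left (hbound ε hε).2 hε.le
  have hlim : Tendsto (fun ε : ℝ => v₀ ⬝ᵥ C *ᵥ v₀ - ε * (C *ᵥ v₀ ⬝ᵥ (C + ε • 1)⁻¹ *ᵥ v₀))
      (𝓝[>] 0) (𝓝 (v₀ ⬝ᵥ C *ᵥ v₀)) := by
    simpa using tendsto_const_nhds.sub hcorr
  refine hlim.congr' ?_
  filter_upwards [self_mem_nhdsWithin] with ε (hε : 0 < ε)
  exact (hC.mulVec_dotProduct_inv_add_smul_one_mulVec_mulVec hε v₀).symm
end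

section
/- Let e₁, …, e_N ∈ ℝⁿ, set C = (1/N)·Σₘ eₘeₘᵀ, and for b ∈ ℝᴺ set Bb = (1/N)·Σₘ bₘeₘ. Then for every b ∈ ℝᴺ there exists a ∈ ℝⁿ with Ca = Bb and ⟨a, Ca⟩ ≤ (1/N)·Σₘ bₘ². -/
open Matrix

theorem stmt_15 {n N : ℕ}
    (e : Fin N → Fin n → ℝ)
    (C : Matrix (Fin n) (Fin n) ℝ)
    (hC : C = (1 / (N : ℝ)) • ∑ m, vecMulVec (e m) (e m))
    (b : Fin N → ℝ) :
    ∃ a : Fin n → ℝ,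
      C.mulVec a = (1 / (N : ℝ)) • ∑ m, b m • e m ∧
      a ⬝ᵥ C.mulVec a ≤ (1 / (N : ℝ)) * ∑ m, (b m) ^ 2 := by
  classical
  set E : Matrix (Fin n) (Fin N) ℝ := Matrix.of fun i m => e m i with hE
  have hEE : (∑ m, vecMulVec (e m) (e m)) = E * Eᵀ := by
    ext i j
    simp [Matrix.sum_apply, vecMulVec_apply, Matrix.mul_apply, hE, mul_comm]
  -- range (E*Eᵀ) = range E
  have hrange : LinearMap.range ((E * Eᵀ).mulVecLin) = LinearMap.range (E.mulVecLin) := by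
    have hle : LinearMap.range ((E * Eᵀ).mulVecLin) ≤ LinearMap.range (E.mulVecLin) := by
      rw [Matrix.mulVecLin_mul]
      exact LinearMap.range_comp_le_range _ _
    refine Submodule.eq_of_le_of_finrank_le hle ?_
    have h1 : (E * Eᵀ).rank = E.rank := Matrix.rank_self_mul_transpose E
    simpa [Matrix.rank] using h1.ge
  have hmem : E.mulVec b ∈ LinearMap.range ((E * Eᵀ).mulVecLin) := by
    rw [hrange]
    exact ⟨b, rfl⟩
  obtain ⟨a, ha⟩ := hmem
  have ha' : (E * Eᵀ).mulVec a = E.mulVec b := ha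
  refine ⟨a, ?_, ?_⟩
  · rw [hC, hEE, Matrix.smul_mulVec, ha']
    congr 1
    ext i
    simp [Matrix.mulVec, dotProduct, hE, mul_comm]
  · set u : Fin N → ℝ := Eᵀ.mulVec a with hu
    have hEu : E.mulVec u = E.mulVec b := by
      rw [hu, Matrix.mulVec_mulVec, ha']
    -- orthogonality: u ⬝ (b - u) = 0
    have horth : u ⬝ᵥ (b - u) = 0 := by
      have : u ⬝ᵥ (b - u) = (b - u) ⬝ᵥ u := dotProduct_comm _ _
      rw [this, hu, Matrix.dotProduct_mulVec, Matrix.vecMul_transpose]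
      have h0 : E.mulVec (b - u) = 0 := by
        rw [Matrix.mulVec_sub, hEu, sub_self]
      rw [h0, zero_dotProduct]
    have huu : u ⬝ᵥ u ≤ b ⬝ᵥ b := by
      have key : b ⬝ᵥ b - u ⬝ᵥ u = (b - u) ⬝ᵥ (b - u) + 2 * (u ⬝ᵥ (b - u)) := by
        simp only [dotProduct, Pi.sub_apply, Finset.mul_sum]
        rw [← Finset.sum_sub_distrib, ← Finset.sum_add_distrib]
        apply Finset.sum_congr rfl
        intro m _
        ring
      have hnn : (0:ℝ) ≤ (b - u) ⬝ᵥ (b - u) :=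
        Finset.sum_nonneg fun m _ => mul_self_nonneg _
      nlinarith [hnn]
    have hquad : a ⬝ᵥ C.mulVec a = (1 / (N : ℝ)) * (u ⬝ᵥ u) := by
      rw [hC, hEE, Matrix.smul_mulVec, dotProduct_smul, smul_eq_mul]
      congr 1
      rw [← Matrix.mulVec_mulVec, Matrix.dotProduct_mulVec, hu, Matrix.mulVec_transpose]
    rw [hquad]
    have hb : b ⬝ᵥ b = ∑ m, (b m) ^ 2 := by
      simp [dotProduct, pow_two]
    have hN : (0:ℝ) ≤ 1 / (N : ℝ) := by positivity
    rw [← hb]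
    exact mul_le_mul_of_nonneg_left huu hN
end

section
/- Let Γ be an m×m real symmetric positive definite matrix, H an m×n real matrix, B an n×N real matrix with N ≥ 1, y' ∈ ℝᵐ, and set C = N·BBᵀ. Then the matrix BᵀHᵀΓ⁻¹HB + (1/N)·I_N is invertible, the function J(b) = ½(y' − HBb)ᵀΓ⁻¹(y' − HBb) + (1/(2N))‖b‖² on ℝᴺ has a unique global minimizer b* = (BᵀHᵀΓ⁻¹HB + (1/N)·I_N)⁻¹BᵀHᵀΓ⁻¹y', and Bb* = CHᵀ(HCHᵀ + Γ)⁻¹y'. -/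
/-!
With `K = H B` and `α = 1 / N`, `J` is the Tikhonov-regularized least-squares objective
`½ ‖y' - K b‖²_{Γ⁻¹} + (α / 2) ‖b‖²`. If `b*` solves the normal equations
`(Kᵀ Γ⁻¹ K + α I) b* = Kᵀ Γ⁻¹ y'`, the linear terms cancel in `J (b* + d)`, which leaves
`J b* + ½ dᵀ (Kᵀ Γ⁻¹ K + α I) d`, a positive definite quadratic form in `d`. The Kalman-gain
form of `B b*` follows from the push-through identity
`Kᵀ Γ⁻¹ (α⁻¹ K Kᵀ + Γ) = α⁻¹ (Kᵀ Γ⁻¹ K + α I) Kᵀ`.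
-/

open Matrix

section RegularizedLeastSquares

variable {ι κ : Type*} [Fintype ι] [Fintype κ]

noncomputable def regularizedLeastSquares (M : Matrix κ κ ℝ) (K : Matrix κ ι ℝ) (α : ℝ)
    (y : κ → ℝ) (b : ι → ℝ) : ℝ :=
  1 / 2 * ((y - K *ᵥ b) ⬝ᵥ M *ᵥ (y - K *ᵥ b)) + α / 2 * (b ⬝ᵥ b)

lemma mulVec_dotProduct_mulVec (K : Matrix κ ι ℝ) (M : Matrix κ κ ℝ) (d : ι → ℝ)
    (v : κ → ℝ) : K *ᵥ d ⬝ᵥ M *ᵥ v = d ⬝ᵥ (Kᵀ * M) *ᵥ v := by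
  rw [dotProduct_mulVec, ← vecMul_transpose, vecMul_vecMul, ← dotProduct_mulVec]

lemma dotProduct_mulVec_comm_of_isSymm {M : Matrix κ κ ℝ} (hM : M.IsSymm) (v w : κ → ℝ) :
    v ⬝ᵥ M *ᵥ w = w ⬝ᵥ M *ᵥ v := by
  rw [dotProduct_mulVec, ← mulVec_transpose, hM.eq, dotProduct_comm]

lemma posDef_smul_mul_transpose_add (K : Matrix κ ι ℝ) {c : ℝ} (hc : 0 ≤ c)
    {Γ : Matrix κ κ ℝ} (hΓ : Γ.PosDef) : (c • (K * Kᵀ) + Γ).PosDef := by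
  have hKK : (K * Kᵀ).PosSemidef := by
    simpa only [conjTranspose_eq_transpose_of_trivial] using posSemidef_self_mul_conjTranspose K
  exact PosDef.posSemidef_add (hKK.smul hc) hΓ

variable [DecidableEq ι]

lemma regularizedLeastSquares_add {M : Matrix κ κ ℝ} (hM : M.IsSymm) (K : Matrix κ ι ℝ)
    (α : ℝ) (y : κ → ℝ) {b : ι → ℝ}
    (hb : (Kᵀ * M * K + α • 1) *ᵥ b = (Kᵀ * M) *ᵥ y) (d : ι → ℝ) :
    regularizedLeastSquares M K α y (b + d) =
      regularizedLeastSquares M K α y b + 1 / 2 * (d ⬝ᵥ (Kᵀ * M * K + α • 1) *ᵥ d) := by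
  rw [regularizedLeastSquares, regularizedLeastSquares]
  set e := y - K *ᵥ b
  have hres : y - K *ᵥ (b + d) = e - K *ᵥ d := by rw [mulVec_add, sub_add_eq_sub_sub]
  have hcross : K *ᵥ d ⬝ᵥ M *ᵥ e = α * (d ⬝ᵥ b) := by
    have hgrad : (Kᵀ * M) *ᵥ e = α • b := by
      rw [mulVec_sub, mulVec_mulVec, ← hb, add_mulVec, add_sub_cancel_left, smul_mulVec,
        one_mulVec]
    rw [mulVec_dotProduct_mulVec, hgrad, dotProduct_smul, smul_eq_mul]
  have hquad : K *ᵥ d ⬝ᵥ M *ᵥ (K *ᵥ d) = d ⬝ᵥ (Kᵀ * M * K) *ᵥ d := by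
    rw [mulVec_dotProduct_mulVec, mulVec_mulVec]
  simp only [hres, mulVec_sub, dotProduct_sub, sub_dotProduct,
    add_dotProduct, dotProduct_add, add_mulVec, smul_mulVec, one_mulVec, dotProduct_smul,
    smul_eq_mul, dotProduct_mulVec_comm_of_isSymm hM e, hcross, hquad, dotProduct_comm b d]
  ring

lemma posDef_transpose_mul_mul_add_smul_one {M : Matrix κ κ ℝ} (hM : M.PosSemidef)
    (K : Matrix κ ι ℝ) {α : ℝ} (hα : 0 < α) : (Kᵀ * M * K + α • 1).PosDef := by
  have hKMK : (Kᵀ * M * K).PosSemidef := by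
    simpa only [conjTranspose_eq_transpose_of_trivial] using hM.conjTranspose_mul_mul_same K
  exact PosDef.posSemidef_add hKMK (PosDef.one.smul hα)

lemma regularizedLeastSquares_lt_of_ne {M : Matrix κ κ ℝ} (hM : M.PosSemidef)
    (K : Matrix κ ι ℝ) {α : ℝ} (hα : 0 < α) (y : κ → ℝ) {b : ι → ℝ}
    (hb : (Kᵀ * M * K + α • 1) *ᵥ b = (Kᵀ * M) *ᵥ y) {b' : ι → ℝ} (hne : b' ≠ b) :
    regularizedLeastSquares M K α y b < regularizedLeastSquares M K α y b' := by
  have hsymm : M.IsSymm := (conjTranspose_eq_transpose_of_trivial M).symm.trans hM.isHermitian.eq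
  have hpos := (posDef_transpose_mul_mul_add_smul_one hM K hα).dotProduct_mulVec_pos
    (sub_ne_zero_of_ne hne)
  rw [star_trivial] at hpos
  have hexp := regularizedLeastSquares_add hsymm K α y hb (b' - b)
  rw [add_sub_cancel] at hexp
  linarith

end RegularizedLeastSquares

section KalmanGain

variable {ι κ 𝕜 : Type*} [Fintype ι] [Fintype κ] [DecidableEq ι] [DecidableEq κ] [Field 𝕜]

lemma inv_transpose_mul_mul_add_smul_one_mul {Γ : Matrix κ κ 𝕜} (hΓ : IsUnit Γ.det)
    (K : Matrix κ ι 𝕜) {α : 𝕜} (hα : α ≠ 0) (hA : IsUnit (Kᵀ * Γ⁻¹ * K + α • 1).det)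
    (hS : IsUnit (α⁻¹ • (K * Kᵀ) + Γ).det) :
    (Kᵀ * Γ⁻¹ * K + α • 1)⁻¹ * (Kᵀ * Γ⁻¹) = α⁻¹ • (Kᵀ * (α⁻¹ • (K * Kᵀ) + Γ)⁻¹) := by
  set A := Kᵀ * Γ⁻¹ * K + α • 1
  set S := α⁻¹ • (K * Kᵀ) + Γ
  have hpush : Kᵀ * Γ⁻¹ * S = α⁻¹ • (A * Kᵀ) := by
    simp only [S, A, Matrix.mul_add, Matrix.add_mul, Matrix.mul_smul, Matrix.smul_mul,
      smul_add, smul_smul, inv_mul_cancel₀ hα, one_smul, Matrix.one_mul, Matrix.mul_assoc,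
      nonsing_inv_mul _ hΓ, Matrix.mul_one]
  calc A⁻¹ * (Kᵀ * Γ⁻¹) = A⁻¹ * (Kᵀ * Γ⁻¹ * S) * S⁻¹ := by
        rw [Matrix.mul_assoc, Matrix.mul_assoc, mul_nonsing_inv _ hS, Matrix.mul_one]
    _ = α⁻¹ • (Kᵀ * S⁻¹) := by
        rw [hpush, Matrix.mul_smul, nonsing_inv_mul_cancel_left _ _ hA, Matrix.smul_mul]

end KalmanGain

theorem stmt_16 {m n N : ℕ} (hN : 1 ≤ N)
    (Γ : Matrix (Fin m) (Fin m) ℝ) (hΓ : Γ.PosDef)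
    (H : Matrix (Fin m) (Fin n) ℝ)
    (B : Matrix (Fin n) (Fin N) ℝ)
    (y' : Fin m → ℝ)
    (C : Matrix (Fin n) (Fin n) ℝ) (hC : C = (N : ℝ) • (B * Bᵀ))
    (J : (Fin N → ℝ) → ℝ)
    (hJ : ∀ b, J b =
      (1 / 2) * ((y' - H.mulVec (B.mulVec b)) ⬝ᵥ
        Γ⁻¹.mulVec (y' - H.mulVec (B.mulVec b))) +
      (1 / (2 * (N : ℝ))) * (b ⬝ᵥ b))
    (bstar : Fin N → ℝ)
    (hbstar : bstar =
      ((Bᵀ * Hᵀ * Γ⁻¹ * H * B + (1 / (N : ℝ)) • 1)⁻¹ *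
        (Bᵀ * Hᵀ * Γ⁻¹)).mulVec y') :
    IsUnit (Bᵀ * Hᵀ * Γ⁻¹ * H * B + (1 / (N : ℝ)) • 1) ∧
    (∀ b : Fin N → ℝ, b ≠ bstar → J bstar < J b) ∧
    B.mulVec bstar = (C * Hᵀ * (H * C * Hᵀ + Γ)⁻¹).mulVec y' := by
  have hα : (0 : ℝ) < 1 / N := one_div_pos.mpr (Nat.cast_pos.mpr hN)
  have hK : Bᵀ * Hᵀ = (H * B)ᵀ := (transpose_mul H B).symm
  have hKMK : Bᵀ * Hᵀ * Γ⁻¹ * H * B = (H * B)ᵀ * Γ⁻¹ * (H * B) := by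
    rw [hK, Matrix.mul_assoc _ H]
  have hApd := posDef_transpose_mul_mul_add_smul_one hΓ.inv.posSemidef (H * B) hα
  have hSpd := posDef_smul_mul_transpose_add (H * B) (inv_pos.mpr hα).le hΓ
  rw [hKMK] at hbstar ⊢
  rw [hK] at hbstar
  have hnormal : ((H * B)ᵀ * Γ⁻¹ * (H * B) + (1 / (N : ℝ)) • 1) *ᵥ bstar
      = ((H * B)ᵀ * Γ⁻¹) *ᵥ y' := by
    rw [hbstar, mulVec_mulVec, ← Matrix.mul_assoc, mul_nonsing_inv _ hApd.det_pos.ne'.isUnit,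
      Matrix.one_mul]
  have hJ' : J = regularizedLeastSquares Γ⁻¹ (H * B) (1 / N) y' := by
    ext b
    rw [hJ, regularizedLeastSquares, mulVec_mulVec]
    ring
  refine ⟨hApd.isUnit, fun b hb => ?_, ?_⟩
  · rw [hJ']
    exact regularizedLeastSquares_lt_of_ne hΓ.inv.posSemidef (H * B) hα y' hnormal hb
  · rw [hbstar, mulVec_mulVec, inv_transpose_mul_mul_add_smul_one_mul hΓ.det_pos.ne'.isUnit
      (H * B) hα.ne' hApd.det_pos.ne'.isUnit hSpd.det_pos.ne'.isUnit, hC, ← hK]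
    simp only [Matrix.mul_smul, Matrix.smul_mul, Matrix.mul_assoc, one_div, inv_inv]
end

section
/- Let G : ℝᵖ → ℝᵈ be any map, Γ a d×d real symmetric positive definite matrix, and let {u_j⁽ⁿ⁾ : j ≥ 0, 1 ≤ n ≤ N} ⊂ ℝᵖ and {y_{j+1}⁽ⁿ⁾} ⊂ ℝᵈ be such that for all j and n: u_{j+1}⁽ⁿ⁾ = u_j⁽ⁿ⁾ + C_{j+1}^{uw}(C_{j+1}^{ww} + Γ)⁻¹(y_{j+1}⁽ⁿ⁾ − G(u_j⁽ⁿ⁾)), where ū_{j+1} = (1/N)Σₙ u_j⁽ⁿ⁾, Ḡ_j = (1/N)Σₙ G(u_j⁽ⁿ⁾), C_{j+1}^{uw} = (1/N)Σₙ (u_j⁽ⁿ⁾ − ū_{j+1})(G(u_j⁽ⁿ⁾) − Ḡ_j)ᵀ and C_{j+1}^{ww} = (1/N)Σₙ (G(u_j⁽ⁿ⁾) − Ḡ_j)(G(u_j⁽ⁿ⁾) − Ḡ_j)ᵀ. Let 𝒜 = span(u₀⁽¹⁾, …, u₀⁽ᴺ⁾). Then u_j⁽ⁿ⁾ ∈ 𝒜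 for all j ≥ 0 and all 1 ≤ n ≤ N. -/
open Matrix

private lemma my_sum_mulVec {ι m n : Type*} [Fintype n] (s : Finset ι)
    (M : ι → Matrix m n ℝ) (v : n → ℝ) :
    (∑ i ∈ s, M i) *ᵥ v = ∑ i ∈ s, M i *ᵥ v := by
  induction s using Finset.cons_induction with
  | empty => simp [Matrix.mulVec, dotProduct]
  | cons a s ha ih => simp [Finset.sum_cons, Matrix.add_mulVec, ih]

private lemma my_vecMulVec_mulVec {m n : Type*} [Fintype n] (a : m → ℝ) (b : n → ℝ)
    (v : n → ℝ) : (vecMulVec a b) *ᵥ v = (b ⬝ᵥ v) • a := by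
  funext i
  simp [Matrix.mulVec, dotProduct, vecMulVec_apply, Finset.mul_sum,
    mul_assoc, mul_comm, mul_left_comm]

theorem stmt_18 {p d N : ℕ}
    (G : (Fin p → ℝ) → (Fin d → ℝ))
    (Γ : Matrix (Fin d) (Fin d) ℝ) (hΓ : Γ.PosDef)
    (u : ℕ → Fin N → Fin p → ℝ)
    (y : ℕ → Fin N → Fin d → ℝ)
    (ubar : ℕ → Fin p → ℝ) (hubar : ∀ j, ubar j = (1 / (N : ℝ)) • ∑ i, u j i)
    (Gbar : ℕ → Fin d → ℝ)
    (hGbar : ∀ j, Gbar j = (1 / (N : ℝ)) • ∑ i, G (u j i))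
    (Cuw : ℕ → Matrix (Fin p) (Fin d) ℝ)
    (hCuw : ∀ j, Cuw j =
      (1 / (N : ℝ)) • ∑ i, vecMulVec (u j i - ubar j) (G (u j i) - Gbar j))
    (Cww : ℕ → Matrix (Fin d) (Fin d) ℝ)
    (hCww : ∀ j, Cww j =
      (1 / (N : ℝ)) • ∑ i, vecMulVec (G (u j i) - Gbar j) (G (u j i) - Gbar j))
    (hupd : ∀ j n, u (j + 1) n =
      u j n + (Cuw j * (Cww j + Γ)⁻¹).mulVec (y (j + 1) n - G (u j n))) :
    ∀ j n, u j n ∈ Submodule.span ℝ (Set.range (u 0)) := by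
  intro j
  induction j with
  | zero => intro n; exact Submodule.subset_span ⟨n, rfl⟩
  | succ j ih =>
    intro n
    set S := Submodule.span ℝ (Set.range (u 0)) with hS
    have hubarS : ubar j ∈ S := by
      rw [hubar]
      exact S.smul_mem _ (Submodule.sum_mem _ fun i _ => ih i)
    rw [hupd]
    refine S.add_mem (ih n) ?_
    rw [← Matrix.mulVec_mulVec, hCuw, Matrix.smul_mulVec]
    refine S.smul_mem _ ?_
    rw [my_sum_mulVec]
    refine Submodule.sum_mem _ fun i _ => ?_
    rw [my_vecMulVec_mulVec]
    exact S.smul_mem _ (S.sub_mem (ih i) hubarS)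
end
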